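/- arXiv:1710.03524 — 3 statements merged into one kernel-verified Lean document; each statement's English description precedes it below -/
import Mathlib

section
/- Every finite simple saturated graph has a universal vertex, i.e., a vertex adjacent to every other vertex of the graph. -/
/-! Basic definitions for edge coloring and split/comparability graphs. -/

variable {V : Type*}

/-- The degree of a vertex. -/
noncomputable def deg (G : SimpleGraph V) (x : V) : ℕ := (G.neighborSet x).ncard

/-- The maximum degree Δ(G). -/
noncomputable def maxDeg (G : SimpleGraph V) : ℕ := sSup (Set.range (deg G))

/-- A proper edge coloring: distinct edges sharing an endpoint get distinct colors. -/
def IsProperEdgeColoring (G : SimpleGraph V) (c : Sym2 V → ℕ) : Prop :=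
  ∀ e ∈ G.edgeSet, ∀ f ∈ G.edgeSet, e ≠ f → (∃ x, x ∈ e ∧ x ∈ f) → c e ≠ c f

/-- `G` has a proper edge coloring with `k` colors. -/
def HasProperEdgeColoring (G : SimpleGraph V) (k : ℕ) : Prop :=
  ∃ c : Sym2 V → ℕ, (∀ e ∈ G.edgeSet, c e < k) ∧ IsProperEdgeColoring G c

/-- The chromatic index χ'(G). -/
noncomputable def chromIndex (G : SimpleGraph V) : ℕ :=
  sInf {k | HasProperEdgeColoring G k}

/-- An edge coloring with colors `< k` is balanced if any two color classes
differ in cardinality by at most 1. -/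
def BalancedEdgeColoring (G : SimpleGraph V) (c : Sym2 V → ℕ) (k : ℕ) : Prop :=
  ∀ i < k, ∀ j < k,
    {e | e ∈ G.edgeSet ∧ c e = i}.ncard ≤ {e | e ∈ G.edgeSet ∧ c e = j}.ncard + 1

/-- A graph is overfull if it has an odd number `n` of vertices and
`m > (n - 1) * Δ / 2` edges. -/
def Overfull (G : SimpleGraph V) : Prop :=
  Odd (Nat.card V) ∧ (Nat.card V - 1) * maxDeg G < 2 * G.edgeSet.ncard

/-- A graph is neighborhood-overfull if the subgraph induced by the closed
neighborhood of some maximum-degree vertex is overfull. -/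
def NeighborhoodOverfull (G : SimpleGraph V) : Prop :=
  ∃ x : V, deg G x = maxDeg G ∧ Overfull (G.induce (G.neighborSet x ∪ {x}))

/-- A graph is subgraph-overfull if it has a subgraph of the same maximum degree
that is overfull. -/
def SubgraphOverfull (G : SimpleGraph V) : Prop :=
  ∃ H : G.Subgraph, maxDeg H.coe = maxDeg G ∧ Overfull H.coe

/-- A graph is saturated if it has an odd number of vertices and its complement
has exactly Δ(G)/2 edges. -/
def Saturated (G : SimpleGraph V) : Prop :=
  Odd (Nat.card V) ∧ 2 * (Gᶜ.edgeSet.ncard) = maxDeg G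

/-- `Q`, `S` form a split partition of `G`: a partition of the vertices into a
clique `Q` and a stable set `S`. -/
def IsSplitPartition (G : SimpleGraph V) (Q S : Set V) : Prop :=
  Q ∪ S = Set.univ ∧ Disjoint Q S ∧ G.IsClique Q ∧ ∀ a ∈ S, ∀ b ∈ S, ¬ G.Adj a b

/-- A split graph. -/
def IsSplit (G : SimpleGraph V) : Prop := ∃ Q S : Set V, IsSplitPartition G Q S

/-- A comparability graph: one admitting a transitive orientation of its edges,
i.e. the comparability graph of a strict partial order. -/
def IsComparability (G : SimpleGraph V) : Prop :=
  ∃ r : V → V → Prop, (∀ a, ¬ r a a) ∧ (∀ a b c, r a b → r b c → r a c) ∧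
    (∀ a b, G.Adj a b ↔ (r a b ∨ r b a))

/-- Form (i): `N(s) = {v_1, …, v_i}` for some `1 ≤ i ≤ p`
(vertices `v_1, …, v_r` being `v 0, …, v (r-1)`). -/
def FormL {r : ℕ} (G : SimpleGraph V) (v : Fin r → V) (p : ℕ) (s : V) : Prop :=
  ∃ i, 1 ≤ i ∧ i ≤ p ∧ G.neighborSet s = v '' {j : Fin r | (j : ℕ) < i}

/-- Form (ii): `N(s) = {v_j, …, v_r}` for some `q ≤ j ≤ r`. -/
def FormR {r : ℕ} (G : SimpleGraph V) (v : Fin r → V) (q : ℕ) (s : V) : Prop :=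
  ∃ j, q ≤ j ∧ j ≤ r ∧ G.neighborSet s = v '' {k : Fin r | j ≤ (k : ℕ) + 1}

/-- Form (iii): `N(s) = {v_1, …, v_i} ∪ {v_j, …, v_r}` for some `1 ≤ i ≤ p`,
`q ≤ j ≤ r`. -/
def FormT {r : ℕ} (G : SimpleGraph V) (v : Fin r → V) (p q : ℕ) (s : V) : Prop :=
  ∃ i j, 1 ≤ i ∧ i ≤ p ∧ q ≤ j ∧ j ≤ r ∧
    G.neighborSet s = v '' {k : Fin r | (k : ℕ) < i} ∪ v '' {k : Fin r | j ≤ (k : ℕ) + 1}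

/-- Every finite simple saturated graph has a universal vertex. -/
theorem saturated_has_universal_vertex
    [Fintype V] (G : SimpleGraph V) (hsat : Saturated G) :
    ∃ u : V, ∀ w : V, w ≠ u → G.Adj u w := by
  classical
  obtain ⟨hodd, hsum⟩ := hsat
  have hn : Nat.card V = Fintype.card V := Nat.card_eq_fintype_card
  by_contra h
  push_neg at h
  -- every vertex has complement-degree ≥ 1
  have hdeg1 : ∀ u : V, 1 ≤ Gᶜ.degree u := by
    intro u
    obtain ⟨w, hw, hnadj⟩ := h u
    have : w ∈ Gᶜ.neighborFinset u := by
      simp [SimpleGraph.mem_neighborFinset, SimpleGraph.compl_adj]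
      exact ⟨(Ne.symm hw), fun ha => hnadj ha⟩
    exact Finset.card_pos.mpr ⟨w, this⟩
  have hne : Nonempty V := by
    by_contra hc
    rw [hn, Fintype.card_eq_zero_iff.mpr (not_nonempty_iff.mp hc)] at hodd
    exact Nat.not_odd_zero hodd
  -- 2 * |E(Gᶜ)| = sum of compl degrees ≥ n
  have hedge : Gᶜ.edgeSet.ncard = Gᶜ.edgeFinset.card := by
    rw [← Set.ncard_coe_finset]; simp
  have hsum2 : ∑ v : V, Gᶜ.degree v = 2 * Gᶜ.edgeFinset.card :=
    Gᶜ.sum_degrees_eq_twice_card_edges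
  have hge : Fintype.card V ≤ maxDeg G := by
    rw [← hsum, hedge, ← hsum2]
    calc Fintype.card V = ∑ _v : V, 1 := by simp
    _ ≤ ∑ v : V, Gᶜ.degree v := Finset.sum_le_sum (fun v _ => hdeg1 v)
  -- each degree ≤ n - 2
  have hd : ∀ x : V, deg G x ≤ Fintype.card V - 2 := by
    intro x
    have h1 : deg G x = G.degree x := by
      simp [deg, SimpleGraph.degree, SimpleGraph.neighborFinset, Set.ncard_eq_toFinset_card']
    have h2 : Gᶜ.degree x = Fintype.card V - 1 - G.degree x := G.degree_compl x
    have h3 := hdeg1 x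
    have h4 : G.degree x ≤ Fintype.card V - 1 := by
      have := G.degree_lt_card_verts x
      omega
    omega
  have hle : maxDeg G ≤ Fintype.card V - 2 := by
    apply csSup_le (Set.range_nonempty _)
    rintro d ⟨x, rfl⟩
    exact hd x
  have : 1 ≤ Fintype.card V := Fintype.card_pos
  omega
end

section
/- If a finite simple graph G admits a proper k-edge-coloring, then G admits a balanced proper k-edge-coloring. -/
/-! Basic definitions for edge coloring and split/comparability graphs. -/

variable {V : Type*}

lemma matching_card_bound [Fintype V] [DecidableEq V] (M : Finset (Sym2 V))
    (hdiag : ∀ e ∈ M, ¬ e.IsDiag)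
    (hdisj : ∀ e ∈ M, ∀ f ∈ M, e ≠ f → ∀ x, x ∈ e → x ∉ f)
    (W : Finset V) (hW : ∀ e ∈ M, ∀ x, x ∈ e → x ∈ W) :
    2 * M.card ≤ W.card := by
  classical
  have hcard : ∀ e ∈ M, (Finset.univ.filter (· ∈ e)).card = 2 := by
    intro e he
    induction e with
    | _ a b =>
      have hab : a ≠ b := by
        intro hab; exact hdiag _ he (by simp [hab])
      have : (Finset.univ.filter (· ∈ (s(a,b) : Sym2 V))) = {a, b} := by
        ext x; simp [Sym2.mem_iff]
      rw [this, Finset.card_insert_of_notMem (by simp [hab]), Finset.card_singleton]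
  have hdisj' : ∀ e ∈ M, ∀ f ∈ M, e ≠ f →
      Disjoint (Finset.univ.filter (· ∈ e)) (Finset.univ.filter (· ∈ f)) := by
    intro e he f hf hef
    rw [Finset.disjoint_left]
    intro x hx hx'
    simp only [Finset.mem_filter] at hx hx'
    exact hdisj e he f hf hef x hx.2 hx'.2
  have hsub : M.biUnion (fun e => Finset.univ.filter (· ∈ e)) ⊆ W := by
    intro x hx
    simp only [Finset.mem_biUnion, Finset.mem_filter] at hx
    obtain ⟨e, he, _, hxe⟩ := hx
    exact hW e he x hxe
  calc 2 * M.card = ∑ e ∈ M, (Finset.univ.filter (· ∈ e)).card := by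
        rw [Finset.sum_congr rfl hcard]; simp [Nat.mul_comm]
    _ = (M.biUnion (fun e => Finset.univ.filter (· ∈ e))).card :=
        (Finset.card_biUnion hdisj').symm
    _ ≤ W.card := Finset.card_le_card hsub

lemma connected_vertex_bound [Fintype V] [DecidableEq V] (SF : Finset (Sym2 V))
    (W : Finset V) (r : V) (hr : r ∈ W)
    (hreach : ∀ v ∈ W, (SimpleGraph.fromEdgeSet (↑SF : Set (Sym2 V))).Reachable r v) :
    W.card ≤ SF.card + 1 := by
  classical
  set GW := SimpleGraph.fromEdgeSet (↑SF : Set (Sym2 V)) with hGW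
  have key : ∀ v ∈ W.erase r, ∃ u, GW.Adj u v ∧ GW.dist r u + 1 = GW.dist r v := by
    intro v hv
    have hvr : v ≠ r := Finset.ne_of_mem_erase hv
    have hvW : v ∈ W := Finset.mem_of_mem_erase hv
    have hre : GW.Reachable r v := hreach v hvW
    obtain ⟨p, hp⟩ := hre.exists_walk_length_eq_dist
    have hlen : p.length ≠ 0 := by
      intro h0
      exact hvr (p.eq_of_length_eq_zero h0).symm
    obtain ⟨u, hadj, q, hq⟩ := SimpleGraph.Walk.exists_eq_cons_of_ne hvr p.reverse
    · refine ⟨u, hadj.symm, ?_⟩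
      have hql : q.length = p.length - 1 := by
        have := congrArg SimpleGraph.Walk.length hq
        simp only [SimpleGraph.Walk.length_reverse, SimpleGraph.Walk.length_cons] at this
        omega
      have h1 : GW.dist r u ≤ p.length - 1 := by
        have := GW.dist_le q.reverse
        simpa [hql] using this
      have hru : GW.Reachable r u := ⟨q.reverse⟩
      obtain ⟨w, hw⟩ := hru.exists_walk_length_eq_dist
      have h2 : GW.dist r v ≤ GW.dist r u + 1 := by
        have := GW.dist_le (w.concat hadj.symm)
        simpa [SimpleGraph.Walk.length_concat, hw] using this
      omega
  choose g hg1 hg2 using key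
  have hmaps : ∀ v (hv : v ∈ W.erase r), s(g v hv, v) ∈ SF := by
    intro v hv
    have := hg1 v hv
    rw [SimpleGraph.fromEdgeSet_adj] at this
    exact_mod_cast this.1
  -- injection from W.erase r into SF
  have hinj : (W.erase r).card ≤ SF.card := by
    have : ∀ (x : {v // v ∈ W.erase r}), s(g x.1 x.2, x.1) ∈ SF := fun x => hmaps x.1 x.2
    have hcard := Fintype.card_le_of_injective
      (fun x : {v // v ∈ W.erase r} => (⟨s(g x.1 x.2, x.1), hmaps x.1 x.2⟩ : {e // e ∈ SF}))
      ?_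
    · rwa [Fintype.card_coe, Fintype.card_coe] at hcard
    · intro a b hab
      simp only [Subtype.mk.injEq, Sym2.eq_iff] at hab
      rcases hab with ⟨h1, h2⟩ | ⟨h1, h2⟩
      · exact Subtype.ext h2
      · exfalso
        have da := hg2 a.1 a.2
        have db := hg2 b.1 b.2
        rw [h1] at da
        rw [← h2] at db
        omega
  have : W.card = (W.erase r).card + 1 := by
    rw [Finset.card_erase_of_mem hr]
    have : 1 ≤ W.card := Finset.card_pos.mpr ⟨r, hr⟩
    omega
  omega

lemma swap_step [Fintype V] [DecidableEq V] (G : SimpleGraph V) [Fintype ↥G.edgeSet]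
    (c : Sym2 V → ℕ) (hprop : IsProperEdgeColoring G c) {i j : ℕ} (hij : i ≠ j)
    (himb : (G.edgeFinset.filter fun e => c e = j).card + 2 ≤
      (G.edgeFinset.filter fun e => c e = i).card) :
    ∃ c' : Sym2 V → ℕ,
      (∀ e, c' e = c e ∨ (c e = i ∧ c' e = j) ∨ (c e = j ∧ c' e = i)) ∧
      IsProperEdgeColoring G c' ∧
      (G.edgeFinset.filter fun e => c' e = i).card + 1 =
        (G.edgeFinset.filter fun e => c e = i).card ∧
      (G.edgeFinset.filter fun e => c' e = j).card =
        (G.edgeFinset.filter fun e => c e = j).card + 1 ∧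
      (∀ a, a ≠ i → a ≠ j → (G.edgeFinset.filter fun e => c' e = a) =
        (G.edgeFinset.filter fun e => c e = a)) := by
  classical
  set E := G.edgeFinset with hE
  set H : Finset (Sym2 V) := E.filter (fun e => c e = i ∨ c e = j) with hH
  have hHE : H ⊆ E := Finset.filter_subset _ _
  have hHcol : ∀ e ∈ H, c e = i ∨ c e = j := fun e he => (Finset.mem_filter.mp he).2
  set L : SimpleGraph {e // e ∈ H} :=
    SimpleGraph.fromRel (fun e f => ∃ x, x ∈ e.val ∧ x ∈ f.val) with hL
  set f : {e // e ∈ H} → L.ConnectedComponent := L.connectedComponentMk with hf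
  -- pigeonhole: some component has more i-edges than j-edges
  have hfiltH : ∀ a, a = i ∨ a = j →
      (H.attach.filter fun e => c e.val = a).card = (E.filter fun e => c e = a).card := by
    intro a ha
    rw [Finset.filter_attach (fun e => c e = a) H, Finset.card_map, Finset.card_attach]
    congr 1
    ext e
    simp only [hH, Finset.mem_filter, and_assoc]
    rcases ha with rfl | rfl <;> tauto
  have hpig : ∃ K : L.ConnectedComponent,
      (H.attach.filter fun e => c e.val = j ∧ f e = K).card + 1 ≤
      (H.attach.filter fun e => c e.val = i ∧ f e = K).card := by
    by_contra hcon
    push_neg at hcon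
    have hsum : ∀ a : ℕ, (H.attach.filter fun e => c e.val = a).card =
        ∑ K ∈ H.attach.image f, (H.attach.filter fun e => c e.val = a ∧ f e = K).card := by
      intro a
      rw [Finset.card_eq_sum_card_fiberwise (f := f) (t := H.attach.image f)
        (fun x hx => Finset.mem_image_of_mem f (Finset.mem_attach _ _))]
      refine Finset.sum_congr rfl fun K _ => ?_
      congr 1
      rw [Finset.filter_filter]
    have hle : (H.attach.filter fun e => c e.val = i).card ≤
        (H.attach.filter fun e => c e.val = j).card := by
      rw [hsum i, hsum j]
      refine Finset.sum_le_sum fun K _ => ?_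
      have := hcon K
      omega
    rw [hfiltH i (Or.inl rfl), hfiltH j (Or.inr rfl)] at hle
    omega
  obtain ⟨K, hK⟩ := hpig
  set SA : Finset {e // e ∈ H} := H.attach.filter (fun e => f e = K) with hSA
  set SF : Finset (Sym2 V) := SA.image Subtype.val with hSF
  have hSFsub : SF ⊆ H := by
    intro e he
    simp only [hSF, Finset.mem_image] at he
    obtain ⟨a, _, rfl⟩ := he
    exact a.2
  have hSFmem : ∀ (e : Sym2 V) (he : e ∈ H), (e ∈ SF ↔ f ⟨e, he⟩ = K) := by
    intro e he
    simp only [hSF, hSA, Finset.mem_image, Finset.mem_filter]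
    constructor
    · rintro ⟨a, ⟨-, ha⟩, rfl⟩
      exact ha
    · intro hfe
      exact ⟨⟨e, he⟩, ⟨Finset.mem_attach _ _, hfe⟩, rfl⟩
  -- closure of SF under adjacency within H
  have hclo : ∀ e ∈ SF, ∀ g ∈ H, e ≠ g → (∃ x, x ∈ e ∧ x ∈ g) → g ∈ SF := by
    intro e he g hg hne hsh
    have heH : e ∈ H := hSFsub he
    have hadj : L.Adj ⟨e, heH⟩ ⟨g, hg⟩ := by
      rw [hL, SimpleGraph.fromRel_adj]
      exact ⟨by simpa using hne, Or.inl hsh⟩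
    rw [hSFmem g hg]
    have h1 : f ⟨g, hg⟩ = f ⟨e, heH⟩ := SimpleGraph.ConnectedComponent.connectedComponentMk_eq_of_adj hadj.symm
    rw [h1, ← hSFmem e heH]
    exact he
  have hSFcol : ∀ e ∈ SF, c e = i ∨ c e = j := fun e he => hHcol e (hSFsub he)
  have hSFE : SF ⊆ E := fun e he => hHE (hSFsub he)
  -- the new coloring
  set c' : Sym2 V → ℕ := fun e => if e ∈ SF then (if c e = i then j else i) else c e with hc'
  have hchange : ∀ e, c' e = c e ∨ (c e = i ∧ c' e = j) ∨ (c e = j ∧ c' e = i) := by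
    intro e
    by_cases hS : e ∈ SF
    · rcases hSFcol e hS with hce | hce
      · right; left; exact ⟨hce, by simp [hc', hS, hce]⟩
      · right; right
        refine ⟨hce, ?_⟩
        have hne : c e ≠ i := by rw [hce]; exact fun h => hij h.symm
        simp [hc', hS, hne]
    · left; simp [hc', hS]
  -- membership in SF forces membership in H for c-colored-{i,j} neighbors
  have hnotSF : ∀ e ∈ SF, ∀ g ∈ E, e ≠ g → (∃ x, x ∈ e ∧ x ∈ g) → g ∉ SF →
      c g ≠ i ∧ c g ≠ j := by
    intro e he g hg hne hsh hgS
    constructor <;> intro hcg <;>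
      exact hgS (hclo e he g (Finset.mem_filter.mpr ⟨hg, by tauto⟩) hne hsh)
  have hprop' : IsProperEdgeColoring G c' := by
    intro e he g hg hne hsh heq
    have heE : e ∈ E := by rwa [hE, SimpleGraph.mem_edgeFinset]
    have hgE : g ∈ E := by rwa [hE, SimpleGraph.mem_edgeFinset]
    have hcc : c e ≠ c g := hprop e he g hg hne hsh
    by_cases heS : e ∈ SF <;> by_cases hgS : g ∈ SF
    · -- both swapped
      rcases hSFcol e heS with h1 | h1 <;> rcases hSFcol g hgS with h2 | h2
      · exact hcc (h1.trans h2.symm)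
      · have e1 : c' e = j := by simp [hc', heS, h1]
        have e2 : c' g = i := by
          have : c g ≠ i := by rw [h2]; exact fun h => hij h.symm
          simp [hc', hgS, this]
        rw [e1, e2] at heq
        exact hij heq.symm
      · have e1 : c' e = i := by
          have : c e ≠ i := by rw [h1]; exact fun h => hij h.symm
          simp [hc', heS, this]
        have e2 : c' g = j := by simp [hc', hgS, h2]
        rw [e1, e2] at heq
        exact hij heq
      · exact hcc (h1.trans h2.symm)
    · have hg' := hnotSF e heS g hgE hne hsh hgS
      have : c' g = c g := by simp [hc', hgS]
      rw [this] at heq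
      rcases hSFcol e heS with h1 | h1
      · simp [hc', heS, h1] at heq; exact hg'.2 heq.symm
      · have : c e ≠ i := by rw [h1]; exact fun h => hij h.symm
        simp [hc', heS, this] at heq; exact hg'.1 heq.symm
    · have he' := hnotSF g hgS e heE (Ne.symm hne) (by obtain ⟨x, hx1, hx2⟩ := hsh; exact ⟨x, hx2, hx1⟩) heS
      have : c' e = c e := by simp [hc', heS]
      rw [this] at heq
      rcases hSFcol g hgS with h1 | h1
      · simp [hc', hgS, h1] at heq; exact he'.2 heq
      · have : c g ≠ i := by rw [h1]; exact fun h => hij h.symm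
        simp [hc', hgS, this] at heq; exact he'.1 heq
    · simp [hc', heS, hgS] at heq
      exact hcc heq
  -- cardinalities
  set Mi : Finset (Sym2 V) := SF.filter (fun e => c e = i) with hMi
  set Mj : Finset (Sym2 V) := SF.filter (fun e => c e = j) with hMj
  set x := (E.filter fun e => c e = i).card with hx
  set y := (E.filter fun e => c e = j).card with hy
  have hMcard : ∀ a : ℕ, (SF.filter fun e => c e = a).card =
      (H.attach.filter fun e => c e.val = a ∧ f e = K).card := by
    intro a
    have himg : SF.filter (fun e => c e = a) =
        (H.attach.filter fun e => c e.val = a ∧ f e = K).image Subtype.val := by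
      ext e
      simp only [Finset.mem_filter, Finset.mem_image]
      constructor
      · rintro ⟨heSF, hca⟩
        have heH : e ∈ H := hSFsub heSF
        exact ⟨⟨e, heH⟩, ⟨Finset.mem_attach _ _,
          hca, (hSFmem e heH).mp heSF⟩, rfl⟩
      · rintro ⟨a, ⟨-, hca, hfK⟩, rfl⟩
        exact ⟨(hSFmem a.val a.2).mpr hfK, hca⟩
    rw [himg, Finset.card_image_of_injective _ Subtype.val_injective]
  have hMicard : Mi.card = (H.attach.filter fun e => c e.val = i ∧ f e = K).card := hMcard i
  have hMjcard : Mj.card = (H.attach.filter fun e => c e.val = j ∧ f e = K).card := hMcard j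
  have hKcard : Mj.card + 1 ≤ Mi.card := by rw [hMicard, hMjcard]; exact hK
  have hSFcard : SF.card = Mi.card + Mj.card := by
    have hneg : SF.filter (fun e => ¬ c e = i) = Mj := by
      ext e
      simp only [hMj, Finset.mem_filter]
      constructor
      · rintro ⟨h1, h2⟩
        rcases hSFcol e h1 with h | h
        · exact absurd h h2
        · exact ⟨h1, h⟩
      · rintro ⟨h1, h2⟩
        exact ⟨h1, by rw [h2]; exact fun h => hij h.symm⟩
    have h2 := Finset.card_filter_add_card_filter_not (s := SF)
      (p := fun e => c e = i)
    rw [hneg, ← hMi] at h2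
    omega
  -- the hard bound: Mi.card ≤ Mj.card + 1
  have hWbound : Mi.card ≤ Mj.card + 1 := by
    set W : Finset V := Finset.univ.filter (fun v => ∃ e ∈ SF, v ∈ e) with hW
    have hmatch : 2 * Mi.card ≤ W.card := by
      refine matching_card_bound Mi ?_ ?_ W ?_
      · intro e he
        exact G.not_isDiag_of_mem_edgeSet (SimpleGraph.mem_edgeFinset.mp
          (hSFE (Finset.mem_filter.mp he).1))
      · intro e he g hg hne xx hx1 hx2
        have he' := Finset.mem_filter.mp he
        have hg' := Finset.mem_filter.mp hg
        exact hprop e (SimpleGraph.mem_edgeFinset.mp (hSFE he'.1)) g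
          (SimpleGraph.mem_edgeFinset.mp (hSFE hg'.1)) hne ⟨xx, hx1, hx2⟩
          (he'.2.trans hg'.2.symm)
      · intro e he xx hx
        simp only [hW, Finset.mem_filter, Finset.mem_univ, true_and]
        exact ⟨e, (Finset.mem_filter.mp he).1, hx⟩
    -- pick a root
    have hMine : Mi.Nonempty := Finset.card_pos.mp (by omega)
    obtain ⟨e0, he0⟩ := hMine
    have he0SF : e0 ∈ SF := (Finset.mem_filter.mp he0).1
    obtain ⟨r, hr⟩ : ∃ r, r ∈ e0 := ⟨e0.out.1, Sym2.out_fst_mem e0⟩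
    have hrW : r ∈ W := by
      simp only [hW, Finset.mem_filter, Finset.mem_univ, true_and]
      exact ⟨e0, he0SF, hr⟩
    -- intra-edge reachability
    set GW := SimpleGraph.fromEdgeSet (↑SF : Set (Sym2 V)) with hGW
    have hintra : ∀ e ∈ SF, ∀ a ∈ e, ∀ b ∈ e, GW.Reachable a b := by
      intro e he a ha b hb
      by_cases hab : a = b
      · subst hab; rfl
      · refine SimpleGraph.Adj.reachable ?_
        rw [hGW, SimpleGraph.fromEdgeSet_adj]
        refine ⟨?_, hab⟩
        have : e = s(a, b) := (Sym2.mem_and_mem_iff hab).mp ⟨ha, hb⟩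
        rw [← this]
        exact_mod_cast he
    have hwalk : ∀ (u w : {e // e ∈ H}) (p : L.Walk u w), f u = K →
        ∀ a ∈ u.val, ∀ b ∈ w.val, GW.Reachable a b := by
      intro u0 w0 p
      induction p with
      | @nil e1 =>
        intro hu a ha b hb
        have huSF : e1.val ∈ SF := by rw [hSFmem e1.val e1.2]; exact hu
        exact hintra e1.val huSF a ha b hb
      | @cons e1 e2 e3 h p ih =>
        intro hu a ha b hb
        have hu' : f e2 = K := by
          have h5 := SimpleGraph.ConnectedComponent.connectedComponentMk_eq_of_adj h.symm
          exact h5.trans hu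
        have huSF : e1.val ∈ SF := by rw [hSFmem e1.val e1.2]; exact hu
        obtain ⟨hne, hsh⟩ := (SimpleGraph.fromRel_adj _ _ _).mp h
        obtain ⟨xx, hx1, hx2⟩ : ∃ xx, xx ∈ e1.val ∧ xx ∈ e2.val := by
          rcases hsh with ⟨xx, h1, h2⟩ | ⟨xx, h1, h2⟩
          exacts [⟨xx, h1, h2⟩, ⟨xx, h2, h1⟩]
        exact (hintra e1.val huSF a ha xx hx1).trans (ih hu' xx hx2 b hb)
    have hreach : ∀ v ∈ W, GW.Reachable r v := by
      intro v hv
      simp only [hW, Finset.mem_filter, Finset.mem_univ, true_and] at hv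
      obtain ⟨e, heSF, hve⟩ := hv
      have heH : e ∈ H := hSFsub heSF
      have he0H : e0 ∈ H := hSFsub he0SF
      have hfe : f ⟨e, heH⟩ = K := (hSFmem e heH).mp heSF
      have hfe0 : f ⟨e0, he0H⟩ = K := (hSFmem e0 he0H).mp he0SF
      have hreL : L.Reachable ⟨e0, he0H⟩ ⟨e, heH⟩ :=
        SimpleGraph.ConnectedComponent.exact (hfe0.trans hfe.symm)
      obtain ⟨p⟩ := hreL
      exact hwalk _ _ p hfe0 r hr v hve
    have hconn := connected_vertex_bound SF W r hrW hreach
    omega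
  have hMieq : Mi.card = Mj.card + 1 := le_antisymm hWbound hKcard
  -- class size computations
  have hMisub : Mi ⊆ E.filter (fun e => c e = i) := by
    intro e he
    have := Finset.mem_filter.mp he
    exact Finset.mem_filter.mpr ⟨hSFE this.1, this.2⟩
  have hMjsub : Mj ⊆ E.filter (fun e => c e = j) := by
    intro e he
    have := Finset.mem_filter.mp he
    exact Finset.mem_filter.mpr ⟨hSFE this.1, this.2⟩
  have hinterMi : (E.filter fun e => c e = i) ∩ SF = Mi := by
    ext e
    simp only [hMi, Finset.mem_inter, Finset.mem_filter]
    constructor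
    · rintro ⟨⟨-, h2⟩, h3⟩; exact ⟨h3, h2⟩
    · rintro ⟨h1, h2⟩; exact ⟨⟨hSFE h1, h2⟩, h1⟩
  have hinterMj : (E.filter fun e => c e = j) ∩ SF = Mj := by
    ext e
    simp only [hMj, Finset.mem_inter, Finset.mem_filter]
    constructor
    · rintro ⟨⟨-, h2⟩, h3⟩; exact ⟨h3, h2⟩
    · rintro ⟨h1, h2⟩; exact ⟨⟨hSFE h1, h2⟩, h1⟩
  have keyi : E.filter (fun e => c' e = i) =
      ((E.filter fun e => c e = i) \ SF) ∪ Mj := by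
    ext e
    simp only [Finset.mem_union, Finset.mem_sdiff, Finset.mem_filter, hMj]
    by_cases hS : e ∈ SF
    · have hcol := hSFcol e hS
      have heE := hSFE hS
      rcases hcol with h1 | h1
      · simp [hc', hS, h1, hij, hij.symm, heE]
      · have hne : c e ≠ i := by rw [h1]; exact fun h => hij h.symm
        simp [hc', hS, h1, hne, heE, hij, hij.symm]
    · simp [hc', hS]
  have keyj : E.filter (fun e => c' e = j) =
      ((E.filter fun e => c e = j) \ SF) ∪ Mi := by
    ext e
    simp only [Finset.mem_union, Finset.mem_sdiff, Finset.mem_filter, hMi]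
    by_cases hS : e ∈ SF
    · have hcol := hSFcol e hS
      have heE := hSFE hS
      rcases hcol with h1 | h1
      · simp [hc', hS, h1, hij, hij.symm, heE]
      · have hne : c e ≠ i := by rw [h1]; exact fun h => hij h.symm
        simp [hc', hS, h1, hne, heE, hij, hij.symm]
    · simp [hc', hS]
  have hdisji : Disjoint ((E.filter fun e => c e = i) \ SF) Mj := by
    rw [Finset.disjoint_left]
    intro e he hm
    exact (Finset.mem_sdiff.mp he).2 ((Finset.mem_filter.mp hm).1)
  have hdisjj : Disjoint ((E.filter fun e => c e = j) \ SF) Mi := by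
    rw [Finset.disjoint_left]
    intro e he hm
    exact (Finset.mem_sdiff.mp he).2 ((Finset.mem_filter.mp hm).1)
  have hsdiffi : ((E.filter fun e => c e = i) \ SF).card + Mi.card = x := by
    have := Finset.card_inter_add_card_sdiff (E.filter fun e => c e = i) SF
    rw [hinterMi] at this
    omega
  have hsdiffj : ((E.filter fun e => c e = j) \ SF).card + Mj.card = y := by
    have := Finset.card_inter_add_card_sdiff (E.filter fun e => c e = j) SF
    rw [hinterMj] at this
    omega
  have hcardi : (E.filter fun e => c' e = i).card + 1 = x := by
    rw [keyi, Finset.card_union_of_disjoint hdisji]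
    omega
  have hcardj : (E.filter fun e => c' e = j).card = y + 1 := by
    rw [keyj, Finset.card_union_of_disjoint hdisjj]
    omega
  refine ⟨c', hchange, hprop', hcardi, hcardj, ?_⟩
  intro a hai haj
  ext e
  simp only [Finset.mem_filter]
  by_cases hS : e ∈ SF
  · rcases hSFcol e hS with h1 | h1
    · have h2 : c e ≠ a := by rw [h1]; exact fun h => hai h.symm
      simp [hc', hS, h1, haj.symm, hai.symm, h2]
    · have hne : c e ≠ i := by rw [h1]; exact fun h => hij h.symm
      have h2 : c e ≠ a := by rw [h1]; exact fun h => haj h.symm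
      simp [hc', hS, hne, hai.symm, haj.symm, h2]
  · simp [hc', hS]

lemma balance_aux [Fintype V] [DecidableEq V] (G : SimpleGraph V) [Fintype ↥G.edgeSet]
    (k : ℕ) :
    ∀ (n : ℕ) (c : Sym2 V → ℕ),
      (∀ e ∈ G.edgeSet, c e < k) → IsProperEdgeColoring G c →
      (∑ a ∈ Finset.range k, ((G.edgeFinset.filter fun e => c e = a).card) ^ 2) ≤ n →
      ∃ c' : Sym2 V → ℕ, (∀ e ∈ G.edgeSet, c' e < k) ∧ IsProperEdgeColoring G c' ∧
        ∀ i < k, ∀ j < k, (G.edgeFinset.filter fun e => c' e = i).card ≤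
          (G.edgeFinset.filter fun e => c' e = j).card + 1 := by
  intro n
  induction n with
  | zero =>
    intro c hbd hprop hsum
    refine ⟨c, hbd, hprop, fun i hi j hj => ?_⟩
    have h1 : ((G.edgeFinset.filter fun e => c e = i).card) ^ 2 ≤ 0 :=
      le_trans (Finset.single_le_sum
        (f := fun a => ((G.edgeFinset.filter fun e => c e = a).card) ^ 2)
        (fun _ _ => Nat.zero_le _) (Finset.mem_range.mpr hi)) hsum
    have h2 : (G.edgeFinset.filter fun e => c e = i).card = 0 := by nlinarith
    omega
  | succ n ih =>
    intro c hbd hprop hsum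
    by_cases hbal : ∀ i < k, ∀ j < k, (G.edgeFinset.filter fun e => c e = i).card ≤
        (G.edgeFinset.filter fun e => c e = j).card + 1
    · exact ⟨c, hbd, hprop, hbal⟩
    · push_neg at hbal
      obtain ⟨i, hi, j, hj, hgt⟩ := hbal
      have hij : i ≠ j := by
        intro h; rw [h] at hgt; omega
      have himb : (G.edgeFinset.filter fun e => c e = j).card + 2 ≤
          (G.edgeFinset.filter fun e => c e = i).card := by omega
      obtain ⟨c', hchange, hprop', hci, hcj, hother⟩ := swap_step G c hprop hij himb
      have hbd' : ∀ e ∈ G.edgeSet, c' e < k := by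
        intro e he
        rcases hchange e with h | ⟨-, h⟩ | ⟨-, h⟩
        · rw [h]; exact hbd e he
        · rw [h]; exact hj
        · rw [h]; exact hi
      apply ih c' hbd' hprop'
      -- potential decreases
      have hiR : i ∈ Finset.range k := Finset.mem_range.mpr hi
      have hjR : j ∈ (Finset.range k).erase i := by
        rw [Finset.mem_erase]; exact ⟨hij.symm ∘ Eq.symm ∘ Eq.symm, Finset.mem_range.mpr hj⟩
      have hsplit : ∀ d : Sym2 V → ℕ,
          ∑ a ∈ Finset.range k, ((G.edgeFinset.filter fun e => d e = a).card) ^ 2 =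
          ((G.edgeFinset.filter fun e => d e = i).card) ^ 2 +
          ((G.edgeFinset.filter fun e => d e = j).card) ^ 2 +
          ∑ a ∈ ((Finset.range k).erase i).erase j,
            ((G.edgeFinset.filter fun e => d e = a).card) ^ 2 := by
        intro d
        rw [← Finset.add_sum_erase _ _ hiR, ← Finset.add_sum_erase _ _ hjR]
        ring
      have htail : ∑ a ∈ ((Finset.range k).erase i).erase j,
            ((G.edgeFinset.filter fun e => c' e = a).card) ^ 2 =
          ∑ a ∈ ((Finset.range k).erase i).erase j,
            ((G.edgeFinset.filter fun e => c e = a).card) ^ 2 := by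
        refine Finset.sum_congr rfl fun a ha => ?_
        obtain ⟨haj, hai, -⟩ : a ≠ j ∧ a ≠ i ∧ a ∈ Finset.range k := by
          rw [Finset.mem_erase, Finset.mem_erase] at ha
          exact ⟨ha.1, ha.2.1, ha.2.2⟩
        rw [hother a hai haj]
      rw [hsplit c'] at *
      rw [hsplit c] at hsum
      rw [htail]
      set X := (G.edgeFinset.filter fun e => c e = i).card
      set Y := (G.edgeFinset.filter fun e => c e = j).card
      set X' := (G.edgeFinset.filter fun e => c' e = i).card
      set Y' := (G.edgeFinset.filter fun e => c' e = j).card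
      have hkey : X' ^ 2 + Y' ^ 2 + 2 ≤ X ^ 2 + Y ^ 2 := by nlinarith
      omega

/-- If a finite simple graph has a proper `k`-edge-coloring,
then it has a balanced proper `k`-edge-coloring. -/
theorem exists_balanced_edge_coloring
    [Fintype V] (G : SimpleGraph V) (k : ℕ)
    (h : HasProperEdgeColoring G k) :
    ∃ c : Sym2 V → ℕ, (∀ e ∈ G.edgeSet, c e < k) ∧
      IsProperEdgeColoring G c ∧ BalancedEdgeColoring G c k := by
  classical
  obtain ⟨c, hbd, hprop⟩ := h
  obtain ⟨c', hbd', hprop', hbal⟩ := balance_aux G k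
    (∑ a ∈ Finset.range k, ((G.edgeFinset.filter fun e => c e = a).card) ^ 2)
    c hbd hprop le_rfl
  refine ⟨c', hbd', hprop', ?_⟩
  intro i hi j hj
  have hset : ∀ a : ℕ, {e | e ∈ G.edgeSet ∧ c' e = a}.ncard =
      (G.edgeFinset.filter fun e => c' e = a).card := by
    intro a
    rw [← Set.ncard_coe_finset]
    congr 1
    ext e
    simp [SimpleGraph.mem_edgeFinset]
  rw [hset i, hset j]
  exact hbal i hi j hj
end

section
/- Let G be a finite simple split graph with vertex partition into a maximal clique Q and a stable set S, with Q totally ordered v_1 < v_2 < ... < v_r and partitioned into consecutive segments Q_l = {v_1,...,v_p}, Q_r = {v_q,...,v_r}, Q_t = Q \ (Q_l ∪ Q_r), such that every s ∈ S has neighborhood of one of the forms (i) {v_1,...,v_i} with i ≤ p, (ii) {v_j,...,v_r} with q ≤ j ≤ r, or (iii) {v_1,...,v_i} ∪ {v_j,...,v_r} with i ≤ p and q ≤ j ≤ r; let S_l, S_r, S_t be the sets of vertices of S of forms (i), (ii), (iii) respectively, and assume p = |N(S_l)| and |N(S_r)| = r - q + 1. If both Q_l and Q_r contain a vertex of degree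 Δ(G), then Δ(G) = |Q| - 1 + |S_l| + |S_t| = |Q| - 1 + |S_r| + |S_t|, and consequently |S_l| = |S_r|. -/
/-! Basic definitions for edge coloring and split/comparability graphs. -/

variable {V : Type*}

/-!
Every vertex `u` of the clique `Q` has degree `|Q| - 1 + |N(u) ∩ S|`, so among clique vertices
the degree is monotone in `N(u) ∩ S`. The forms force `N(v_1) ∩ S = S_l ∪ S_t`, and every vertex
of `Q_l` sees only vertices of `S_l ∪ S_t`; hence a maximum-degree vertex in `Q_l` has degree at
most that of `v_1`, and `Δ(G) = deg v_1 = |Q| - 1 + |S_l| + |S_t|`. Symmetrically `v_r` gives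
`Δ(G) = |Q| - 1 + |S_r| + |S_t|`.
-/

theorem deg_le_maxDeg [Finite V] (G : SimpleGraph V) (x : V) : deg G x ≤ maxDeg G :=
  le_csSup (Set.finite_range _).bddAbove ⟨x, rfl⟩

variable {G : SimpleGraph V}

namespace IsSplitPartition

variable {Q S : Set V} {u w : V}

theorem neighborSet_eq_of_mem_clique (h : IsSplitPartition G Q S) (hu : u ∈ Q) :
    G.neighborSet u = (Q \ {u}) ∪ (G.neighborSet u ∩ S) := by
  obtain ⟨hQS, -, hQ, -⟩ := h
  ext x
  have hx : x ∈ Q ∪ S := hQS ▸ Set.mem_univ x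
  constructor
  · intro hux
    rcases hx with hxQ | hxS
    · exact Or.inl ⟨hxQ, (G.ne_of_adj hux).symm⟩
    · exact Or.inr ⟨hux, hxS⟩
  · rintro (⟨hxQ, hxu⟩ | ⟨hux, -⟩)
    · exact hQ hu hxQ (Ne.symm hxu)
    · exact hux

theorem deg_eq_of_mem_clique [Finite V] (h : IsSplitPartition G Q S) (hu : u ∈ Q) :
    deg G u = Q.ncard - 1 + (G.neighborSet u ∩ S).ncard := by
  have hdisj : Disjoint (Q \ {u}) (G.neighborSet u ∩ S) :=
    h.2.1.mono Set.sdiff_subset Set.inter_subset_right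
  rw [deg]
  nth_rw 1 [h.neighborSet_eq_of_mem_clique hu]
  rw [Set.ncard_union_eq hdisj, Set.ncard_sdiff_singleton_of_mem hu]

theorem maxDeg_eq_of_neighborSet_inter_subset [Finite V] (h : IsSplitPartition G Q S)
    (hu : u ∈ Q) (hw : w ∈ Q) (hmax : deg G u = maxDeg G)
    (hsub : G.neighborSet u ∩ S ⊆ G.neighborSet w ∩ S) :
    maxDeg G = Q.ncard - 1 + (G.neighborSet w ∩ S).ncard := by
  rw [← h.deg_eq_of_mem_clique hw]
  refine le_antisymm ?_ (deg_le_maxDeg G w)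
  rw [← hmax, h.deg_eq_of_mem_clique hu, h.deg_eq_of_mem_clique hw]
  exact Nat.add_le_add_left (Set.ncard_le_ncard hsub) _

end IsSplitPartition

variable {r p q : ℕ} {v : Fin r → V} {s : V} {k : Fin r}

theorem FormL.adj_of_val_eq_zero (hs : FormL G v p s) (hk : (k : ℕ) = 0) : G.Adj (v k) s := by
  obtain ⟨i, hi, -, hN⟩ := hs
  rw [G.adj_comm, ← G.mem_neighborSet, hN]
  exact Set.mem_image_of_mem v (show (k : ℕ) < i by omega)

theorem FormL.not_adj_of_le (hv : Function.Injective v) (hs : FormL G v p s) (hk : p ≤ k) :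
    ¬ G.Adj (v k) s := by
  obtain ⟨i, -, hip, hN⟩ := hs
  rw [G.adj_comm, ← G.mem_neighborSet, hN, hv.mem_set_image, Set.mem_ofPred_eq]
  omega

theorem FormR.adj_of_val_add_one_eq (hs : FormR G v q s) (hk : (k : ℕ) + 1 = r) :
    G.Adj (v k) s := by
  obtain ⟨j, -, hjr, hN⟩ := hs
  rw [G.adj_comm, ← G.mem_neighborSet, hN]
  exact Set.mem_image_of_mem v (show j ≤ (k : ℕ) + 1 by omega)

theorem FormR.not_adj_of_lt (hv : Function.Injective v) (hs : FormR G v q s)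
    (hk : (k : ℕ) + 1 < q) : ¬ G.Adj (v k) s := by
  obtain ⟨j, hqj, -, hN⟩ := hs
  rw [G.adj_comm, ← G.mem_neighborSet, hN, hv.mem_set_image, Set.mem_ofPred_eq]
  omega

theorem FormT.adj_of_val_eq_zero (hs : FormT G v p q s) (hk : (k : ℕ) = 0) : G.Adj (v k) s := by
  obtain ⟨i, j, hi, -, -, -, hN⟩ := hs
  rw [G.adj_comm, ← G.mem_neighborSet, hN]
  exact Or.inl (Set.mem_image_of_mem v (show (k : ℕ) < i by omega))

theorem FormT.adj_of_val_add_one_eq (hs : FormT G v p q s) (hk : (k : ℕ) + 1 = r) :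
    G.Adj (v k) s := by
  obtain ⟨i, j, -, -, -, hjr, hN⟩ := hs
  rw [G.adj_comm, ← G.mem_neighborSet, hN]
  exact Or.inr (Set.mem_image_of_mem v (show j ≤ (k : ℕ) + 1 by omega))

theorem disjoint_formL_formT (hv : Function.Injective v) (hk : (k : ℕ) + 1 = r) (hp : p ≤ k) :
    Disjoint {s | FormL G v p s} {s | FormT G v p q s} :=
  Set.disjoint_left.2 fun _ hL hT => hL.not_adj_of_le hv hp (hT.adj_of_val_add_one_eq hk)

theorem disjoint_formR_formT (hv : Function.Injective v) (hk : (k : ℕ) = 0) (hq : 1 < q) :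
    Disjoint {s | FormR G v q s} {s | FormT G v p q s} :=
  Set.disjoint_left.2 fun _ hR hT => hR.not_adj_of_lt hv (by omega) (hT.adj_of_val_eq_zero hk)

section Forms

variable {S : Set V} (hv : Function.Injective v)
  (hforms : ∀ s ∈ S, FormL G v p s ∨ FormR G v q s ∨ FormT G v p q s)
include hv hforms

theorem neighborSet_inter_subset_formL_union_formT (hk : (k : ℕ) + 1 < q) :
    G.neighborSet (v k) ∩ S ⊆ {s ∈ S | FormL G v p s} ∪ {s ∈ S | FormT G v p q s} := by
  rintro s ⟨hadj, hs⟩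
  rcases hforms s hs with hL | hR | hT
  · exact Or.inl ⟨hs, hL⟩
  · exact absurd hadj (hR.not_adj_of_lt hv hk)
  · exact Or.inr ⟨hs, hT⟩

theorem neighborSet_inter_subset_formR_union_formT (hk : p ≤ k) :
    G.neighborSet (v k) ∩ S ⊆ {s ∈ S | FormR G v q s} ∪ {s ∈ S | FormT G v p q s} := by
  rintro s ⟨hadj, hs⟩
  rcases hforms s hs with hL | hR | hT
  · exact absurd hadj (hL.not_adj_of_le hv hk)
  · exact Or.inl ⟨hs, hR⟩
  · exact Or.inr ⟨hs, hT⟩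

theorem neighborSet_inter_eq_formL_union_formT (hk : (k : ℕ) = 0) (hq : 1 < q) :
    G.neighborSet (v k) ∩ S = {s ∈ S | FormL G v p s} ∪ {s ∈ S | FormT G v p q s} :=
  (neighborSet_inter_subset_formL_union_formT hv hforms (by omega)).antisymm <|
    Set.union_subset (fun _ hs => ⟨hs.2.adj_of_val_eq_zero hk, hs.1⟩)
      (fun _ hs => ⟨hs.2.adj_of_val_eq_zero hk, hs.1⟩)

theorem neighborSet_inter_eq_formR_union_formT (hk : (k : ℕ) + 1 = r) (hp : p < r) :
    G.neighborSet (v k) ∩ S = {s ∈ S | FormR G v q s} ∪ {s ∈ S | FormT G v p q s} :=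
  (neighborSet_inter_subset_formR_union_formT hv hforms (by omega)).antisymm <|
    Set.union_subset (fun _ hs => ⟨hs.2.adj_of_val_add_one_eq hk, hs.1⟩)
      (fun _ hs => ⟨hs.2.adj_of_val_add_one_eq hk, hs.1⟩)

end Forms

theorem maxDeg_formula_of_delta_vertices_in_Ql_Qr_general
    [Fintype V] (G : SimpleGraph V) (Q S : Set V)
    (hsplit : IsSplitPartition G Q S)
    (r : ℕ) (v : Fin r → V) (hv : Function.Injective v) (hvQ : Set.range v = Q)
    (p q : ℕ) (hpq : p < q)
    (hforms : ∀ s ∈ S, FormL G v p s ∨ FormR G v q s ∨ FormT G v p q s)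
    (Sl Sr St : Set V)
    (hSl : Sl = {s ∈ S | FormL G v p s})
    (hSr : Sr = {s ∈ S | FormR G v q s})
    (hSt : St = {s ∈ S | FormT G v p q s})
    (hl : ∃ a ∈ v '' {j : Fin r | (j : ℕ) < p}, deg G a = maxDeg G)
    (hr : ∃ b ∈ v '' {k : Fin r | q ≤ (k : ℕ) + 1}, deg G b = maxDeg G) :
    maxDeg G = Q.ncard - 1 + Sl.ncard + St.ncard ∧
    maxDeg G = Q.ncard - 1 + Sr.ncard + St.ncard ∧
    Sl.ncard = Sr.ncard := by
  obtain ⟨_, ⟨a, ha, rfl⟩, hda⟩ := hl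
  obtain ⟨_, ⟨b, hb, rfl⟩, hdb⟩ := hr
  simp only [Set.mem_ofPred_eq] at ha hb
  subst hSl hSr hSt
  have hq : 1 < q := by omega
  have hp : p < r := by omega
  obtain ⟨first, hfirst⟩ : ∃ k : Fin r, (k : ℕ) = 0 := ⟨⟨0, by omega⟩, rfl⟩
  obtain ⟨last, hlast⟩ : ∃ k : Fin r, (k : ℕ) + 1 = r := ⟨⟨r - 1, by omega⟩, by simp only; omega⟩
  have hmemQ (k : Fin r) : v k ∈ Q := hvQ ▸ Set.mem_range_self k
  have hfirstS := neighborSet_inter_eq_formL_union_formT hv hforms hfirst hq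
  have hlastS := neighborSet_inter_eq_formR_union_formT hv hforms hlast hp
  have hΔl := hsplit.maxDeg_eq_of_neighborSet_inter_subset (hmemQ a) (hmemQ first) hda
    (hfirstS ▸ neighborSet_inter_subset_formL_union_formT hv hforms (by omega))
  have hΔr := hsplit.maxDeg_eq_of_neighborSet_inter_subset (hmemQ b) (hmemQ last) hdb
    (hlastS ▸ neighborSet_inter_subset_formR_union_formT hv hforms (by omega))
  rw [hfirstS, Set.ncard_union_eq <| (disjoint_formL_formT hv hlast (by omega)).mono
    (fun _ h => h.2) (fun _ h => h.2)] at hΔl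
  rw [hlastS, Set.ncard_union_eq <| (disjoint_formR_formT hv hfirst hq).mono
    (fun _ h => h.2) (fun _ h => h.2)] at hΔr
  omega

/-- In a split graph with the split-comparability structure
and `Q` a maximal clique, if both `Q_l` and `Q_r` contain a maximum-degree
vertex, then `Δ(G) = |Q| - 1 + |S_l| + |S_t| = |Q| - 1 + |S_r| + |S_t|`, hence
`|S_l| = |S_r|`. -/
theorem maxDeg_formula_of_delta_vertices_in_Ql_Qr
    [Fintype V] (G : SimpleGraph V) (Q S : Set V)
    (hsplit : IsSplitPartition G Q S)
    (r : ℕ) (v : Fin r → V) (hv : Function.Injective v) (hvQ : Set.range v = Q)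
    (p q : ℕ) (hpr : p ≤ r) (hpq : p < q) (hqr : q ≤ r + 1)
    (hforms : ∀ s ∈ S, FormL G v p s ∨ FormR G v q s ∨ FormT G v p q s)
    (Sl Sr St : Set V)
    (hSl : Sl = {s ∈ S | FormL G v p s})
    (hSr : Sr = {s ∈ S | FormR G v q s})
    (hSt : St = {s ∈ S | FormT G v p q s})
    (hNSl : (⋃ s ∈ Sl, G.neighborSet s).ncard = p)
    (hNSr : (⋃ s ∈ Sr, G.neighborSet s).ncard = r + 1 - q)
    (hQmax : ∀ Q' : Set V, G.IsClique Q' → Q ⊆ Q' → Q' = Q)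
    (hl : ∃ a ∈ v '' {j : Fin r | (j : ℕ) < p}, deg G a = maxDeg G)
    (hr : ∃ b ∈ v '' {k : Fin r | q ≤ (k : ℕ) + 1}, deg G b = maxDeg G) :
    maxDeg G = Q.ncard - 1 + Sl.ncard + St.ncard ∧
    maxDeg G = Q.ncard - 1 + Sr.ncard + St.ncard ∧
    Sl.ncard = Sr.ncard :=
  maxDeg_formula_of_delta_vertices_in_Ql_Qr_general G Q S hsplit r v hv hvQ p q hpq hforms Sl Sr St
    hSl hSr hSt hl hr
end
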